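/- Let z be an internal node of P with children z_l, z_r such that g(z) ≠ g(z_l) and g(z) ≠ g(z_r). Then for any leaf x below z_l and any leaf y below z_r, lca_G({g(x), g(y)}) = g(z). -/
import Mathlib


inductive BTree (α : Type) : Type
  | leaf : α → BTree α
  | node : BTree α → BTree α → BTree α
deriving DecidableEq

namespace BTree

variable {α β : Type} [DecidableEq α] [DecidableEq β]

/-- The set of leaf labels of a tree. -/
def leaves : BTree α → Finset α
  | leaf a => {a}
  | node l r => leaves l ∪ leaves r

/-- Number of leaves. -/
def leafCount : BTree α → ℕ
  | leaf _ => 1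
  | node l r => leafCount l + leafCount r

/-- Number of internal nodes. -/
def internalCount : BTree α → ℕ
  | leaf _ => 0
  | node l r => internalCount l + internalCount r + 1

/-- The nodes of a tree, identified with the subtrees they root. -/
def nodes : BTree α → List (BTree α)
  | leaf a => [leaf a]
  | node l r => node l r :: (nodes l ++ nodes r)

/-- `Anc t u` : `u` is a node of (the subtree rooted at) `t`,
i.e. `t` is an ancestor of `u` (possibly `t = u`). -/
def Anc (t u : BTree α) : Prop := u ∈ nodes t

/-- All leaf labels are pairwise distinct. -/
def distinctLeaves : BTree α → Prop
  | leaf _ => True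
  | node l r => Disjoint (leaves l) (leaves r) ∧ distinctLeaves l ∧ distinctLeaves r

/-- The (subtree rooted at the) lowest common ancestor of a set `L` of leaf labels. -/
def lca : BTree α → Finset α → BTree α
  | leaf a, _ => leaf a
  | node l r, L =>
    if L ⊆ leaves l then lca l L
    else if L ⊆ leaves r then lca r L
    else node l r

/-- LCA-extension of a leaf map `s : α → β` : the image in the lower tree `S` of a node
`x` of the upper tree, namely the lca in `S` of the images of the leaves below `x`. -/
def mapLca (S : BTree β) (s : α → β) (x : BTree α) : BTree β :=
  lca S ((leaves x).image s)

/-- Depth of the node `u` below the node `t` (number of edges on the path). -/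
def depthOf : BTree α → BTree α → ℕ
  | leaf _, _ => 0
  | node l r, u =>
    if node l r = u then 0
    else if u ∈ nodes l then depthOf l u + 1 else depthOf r u + 1

inductive GLabel : Type
  | Spec | Dup
deriving DecidableEq

/-- LCA-reconciliation labeling of the nodes of a gene tree with respect to
a species tree `S` (internal nodes only; leaves get the dummy label `Spec`). -/
def glab (S : BTree β) (s : α → β) : BTree α → GLabel
  | leaf _ => GLabel.Spec
  | node l r =>
    if mapLca S s (node l r) ≠ mapLca S s l ∧ mapLca S s (node l r) ≠ mapLca S s r
    then GLabel.Spec else GLabel.Dup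

/-- Duplication cost `D(G,S)` : number of internal nodes labeled `Dup`. -/
def dupCost (S : BTree β) (s : α → β) : BTree α → ℕ
  | leaf _ => 0
  | node l r =>
    (if glab S s (node l r) = GLabel.Dup then 1 else 0) + dupCost S s l + dupCost S s r

/-- Losses induced on the edge from `x` to its child `y`. -/
def lossEdge (S : BTree β) (s : α → β) (x y : BTree α) : ℕ :=
  if mapLca S s x = mapLca S s y then 0
  else (depthOf (mapLca S s x) (mapLca S s y) - 1) +
    (if glab S s x = GLabel.Dup then 1 else 0)

/-- Loss cost `L(G,S)` : total number of losses induced on the edges of `G`. -/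
def lossCost (S : BTree β) (s : α → β) : BTree α → ℕ
  | leaf _ => 0
  | node l r =>
    lossEdge S s (node l r) l + lossEdge S s (node l r) r + lossCost S s l + lossCost S s r

inductive PLabel : Type
  | Spec | Dup | Creat
deriving DecidableEq

/-- LCA-reconciliation labeling of the nodes of a protein tree `P` with respect to a
gene tree `G` (with its own labeling `lG`); leaves get the dummy label `Creat`. -/
def plab (G : BTree β) (g : α → β) (lG : BTree β → GLabel) : BTree α → PLabel
  | leaf _ => PLabel.Creat
  | node l r =>
    if mapLca G g (node l r) ≠ mapLca G g l ∧ mapLca G g (node l r) ≠ mapLca G g r then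
      (match lG (mapLca G g (node l r)) with
        | GLabel.Spec => PLabel.Spec
        | GLabel.Dup => PLabel.Dup)
    else PLabel.Creat

/-- Creation cost `C(P,G)` : number of internal nodes of `P` labeled `Creat`. -/
def creatCost (G : BTree β) (g : α → β) (lG : BTree β → GLabel) : BTree α → ℕ
  | leaf _ => 0
  | node l r =>
    (if plab G g lG (node l r) = PLabel.Creat then 1 else 0) +
      creatCost G g lG l + creatCost G g lG r

/-- Protein losses induced on the edge from `x` to its child `y`. -/
def plossEdge (G : BTree β) (g : α → β) (lG : BTree β → GLabel) (x y : BTree α) : ℕ :=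
  if mapLca G g x = mapLca G g y then 0
  else (depthOf (mapLca G g x) (mapLca G g y) - 1) +
    (if plab G g lG x = PLabel.Creat then 1 else 0)

/-- Protein loss cost `L(P,G)`. -/
def plossCost (G : BTree β) (g : α → β) (lG : BTree β → GLabel) : BTree α → ℕ
  | leaf _ => 0
  | node l r =>
    plossEdge G g lG (node l r) l + plossEdge G g lG (node l r) r +
      plossCost G g lG l + plossCost G g lG r

/-- Relabel the leaves of a tree via `f` (e.g. `g(P)`). -/
def relabel (f : α → β) : BTree α → BTree β
  | leaf a => leaf (f a)
  | node l r => node (relabel f l) (relabel f r)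

end BTree

open BTree in
lemma lca_pair_key {β : Type} [DecidableEq β] (G : BTree β) (hG : G.distinctLeaves)
    (A B : Finset β) (a b : β) (ha : a ∈ A) (hb : b ∈ B)
    (h1 : G.lca (A ∪ B) ≠ G.lca A) (h2 : G.lca (A ∪ B) ≠ G.lca B) :
    G.lca {a, b} = G.lca (A ∪ B) := by
  induction G with
  | leaf c => simp [lca]
  | node l r ihl ihr =>
    obtain ⟨hdisj, hl, hr⟩ := hG
    have hab_sub : ∀ s : Finset β, A ⊆ s → B ⊆ s → ({a, b} : Finset β) ⊆ s := by
      intro s hA hB x hx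
      simp only [Finset.mem_insert, Finset.mem_singleton] at hx
      rcases hx with rfl | rfl
      · exact hA ha
      · exact hB hb
    by_cases hABl : A ∪ B ⊆ l.leaves
    · have hA : A ⊆ l.leaves := (Finset.union_subset_iff.mp hABl).1
      have hB : B ⊆ l.leaves := (Finset.union_subset_iff.mp hABl).2
      simp only [lca, if_pos hABl, if_pos hA, if_pos hB,
        if_pos (hab_sub _ hA hB)] at h1 h2 ⊢
      exact ihl hl h1 h2
    · by_cases hABr : A ∪ B ⊆ r.leaves
      · have hA : A ⊆ r.leaves := (Finset.union_subset_iff.mp hABr).1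
        have hB : B ⊆ r.leaves := (Finset.union_subset_iff.mp hABr).2
        have haL : a ∉ l.leaves := fun h => Finset.disjoint_left.mp hdisj h (hA ha)
        have hAl : ¬ A ⊆ l.leaves := fun h => haL (h ha)
        have hBl : ¬ B ⊆ l.leaves := fun h =>
          Finset.disjoint_left.mp hdisj (h hb) (hB hb)
        have habl : ¬ ({a, b} : Finset β) ⊆ l.leaves := fun h =>
          haL (h (by simp))
        simp only [lca, if_neg hABl, if_pos hABr, if_neg hAl, if_pos hA,
          if_neg hBl, if_pos hB, if_neg habl, if_pos (hab_sub _ hA hB)] at h1 h2 ⊢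
        exact ihr hr h1 h2
      · -- lca of A ∪ B is node l r
        simp only [lca, if_neg hABl, if_neg hABr] at h1 h2 ⊢
        -- A is contained in one side
        have hAcase : A ⊆ l.leaves ∨ A ⊆ r.leaves := by
          by_contra hc
          push_neg at hc
          exact h1 (by simp [if_neg hc.1, if_neg hc.2])
        have hBcase : B ⊆ l.leaves ∨ B ⊆ r.leaves := by
          by_contra hc
          push_neg at hc
          exact h2 (by simp [if_neg hc.1, if_neg hc.2])
        have hsplit : (a ∈ l.leaves ∧ b ∈ r.leaves) ∨ (a ∈ r.leaves ∧ b ∈ l.leaves) := by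
          rcases hAcase with hA | hA <;> rcases hBcase with hB | hB
          · exact absurd (Finset.union_subset hA hB) hABl
          · exact Or.inl ⟨hA ha, hB hb⟩
          · exact Or.inr ⟨hA ha, hB hb⟩
          · exact absurd (Finset.union_subset hA hB) hABr
        rcases hsplit with ⟨hal, hbr⟩ | ⟨har, hbl⟩
        · have h1' : ¬ ({a, b} : Finset β) ⊆ l.leaves := fun h =>
            Finset.disjoint_left.mp hdisj (h (by simp)) hbr
          have h2' : ¬ ({a, b} : Finset β) ⊆ r.leaves := fun h =>
            Finset.disjoint_left.mp hdisj hal (h (by simp))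
          simp [if_neg h1', if_neg h2']
        · have h1' : ¬ ({a, b} : Finset β) ⊆ l.leaves := fun h =>
            Finset.disjoint_left.mp hdisj (h (by simp)) har
          have h2' : ¬ ({a, b} : Finset β) ⊆ r.leaves := fun h =>
            Finset.disjoint_left.mp hdisj hbl (h (by simp))
          simp [if_neg h1', if_neg h2']

open BTree in
/-- if `z = node zl zr` satisfies `g(z) ≠ g(z_l)` and `g(z) ≠ g(z_r)`
(with `g` extended by LCA), then for any leaf `x` below `z_l` and any leaf `y` below
`z_r`, `lca_G({g x, g y}) = g(z)`. -/
theorem stmt13 {α β : Type} [DecidableEq α] [DecidableEq β]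
    (G : BTree β) (g : α → β) (zl zr : BTree α)
    (hG : G.distinctLeaves)
    (hmap : ∀ a ∈ (BTree.node zl zr).leaves, g a ∈ G.leaves)
    (hz : (BTree.node zl zr).distinctLeaves)
    (h1 : mapLca G g (BTree.node zl zr) ≠ mapLca G g zl)
    (h2 : mapLca G g (BTree.node zl zr) ≠ mapLca G g zr)
    (x y : α) (hx : x ∈ zl.leaves) (hy : y ∈ zr.leaves) :
    G.lca {g x, g y} = mapLca G g (BTree.node zl zr) := by
  have hunion : ((BTree.node zl zr).leaves).image g =
      (zl.leaves.image g) ∪ (zr.leaves.image g) := by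
    simp [BTree.leaves, Finset.image_union]
  rw [mapLca, hunion]
  rw [mapLca, hunion] at h1 h2
  exact lca_pair_key G hG _ _ (g x) (g y)
    (Finset.mem_image_of_mem g hx) (Finset.mem_image_of_mem g hy) h1 h2
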